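/- arXiv:2510.16991 — 3 statements merged into one kernel-verified Lean document; each statement's English description precedes it below -/
import Mathlib

section
/- Let q be a prime power, F_q ⊆ F_{q²} a quadratic field extension, and f : F_{q²}^t → F_{q²} a polynomial of total degree at most d < q. If the fraction of points x ∈ F_q^t with f(x) ∈ F_q is strictly greater than d/q, then all coefficients of f lie in F_q; in particular f restricts to a polynomial map F_q^t → F_q of the same total and individual degrees. -/
open MvPolynomial Finset
open scoped Classical

lemma sz_aux (F : Type) [Field F] [Fintype F] :
    ∀ (n : ℕ) (g : MvPolynomial (Fin n) F), g ≠ 0 →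
    (Finset.univ.filter fun x : Fin n → F => eval x g = 0).card * Fintype.card F
      ≤ g.totalDegree * Fintype.card F ^ n := by
  intro n
  induction n with
  | zero =>
    intro g hg
    have h0 : (Finset.univ.filter fun x : Fin 0 → F => eval x g = 0).card = 0 := by
      rw [Finset.card_eq_zero, Finset.filter_eq_empty_iff]
      intro x _
      obtain ⟨c, rfl⟩ := MvPolynomial.C_surjective (Fin 0) g
      simp only [eval_C]
      exact fun h => hg (by simp [h])
    rw [h0]
    simp
  | succ n ih =>
    intro g hg
    set q := Fintype.card F with hq
    set p := finSuccEquiv F n g with hp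
    have hpne : p ≠ 0 := by
      simp [hp, EmbeddingLike.map_eq_zero_iff, hg]
    set k := p.natDegree with hk
    set L := p.leadingCoeff with hL
    have hLne : L ≠ 0 := Polynomial.leadingCoeff_ne_zero.mpr hpne
    have hdeg : L.totalDegree + k ≤ g.totalDegree := by
      have h2 : (finSuccEquiv F n g).coeff k ≠ 0 := by
        rw [← hp, hk, Polynomial.coeff_natDegree, ← hL]; exact hLne
      have h3 := totalDegree_coeff_finSuccEquiv_add_le g k h2
      rw [← hp, hk, Polynomial.coeff_natDegree, ← hL, ← hk] at h3
      exact h3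
    have hcount : (Finset.univ.filter fun x : Fin (n+1) → F => eval x g = 0).card
        = ∑ x' : Fin n → F, ((Finset.univ.filter fun x : Fin (n+1) → F =>
            eval x g = 0).filter fun x => Fin.tail x = x').card :=
      Finset.card_eq_sum_card_fiberwise (fun x _ => Finset.mem_univ _)
    have hinj : ∀ x' : Fin n → F, Set.InjOn (fun x : Fin (n+1) → F => x 0)
        ((Finset.univ.filter fun x : Fin (n+1) → F => eval x g = 0).filter
          fun x => Fin.tail x = x') := by
      intro x' a ha b hb hab
      simp only [Finset.coe_filter, Set.mem_setOf_eq] at ha hb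
      have hab' : a 0 = b 0 := hab
      have : Fin.cons (a 0) (Fin.tail a) = Fin.cons (b 0) (Fin.tail b) := by
        rw [hab', ha.2, hb.2]
      simpa [Fin.cons_self_tail] using this
    have hfiber : ∀ x' : Fin n → F,
        ((Finset.univ.filter fun x : Fin (n+1) → F => eval x g = 0).filter
          fun x => Fin.tail x = x').card ≤ if eval x' L = 0 then q else k := by
      intro x'
      split_ifs with hLx
      · have h1 : ((Finset.univ.filter fun x : Fin (n+1) → F => eval x g = 0).filter
            fun x => Fin.tail x = x').card ≤ (Finset.univ : Finset F).card :=
          Finset.card_le_card_of_injOn (fun x => x 0) (fun a _ => Finset.mem_univ _) (hinj x')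
        simpa [hq] using h1
      · set P := Polynomial.map (eval x') p with hP
        have hPk : P.coeff k ≠ 0 := by
          rw [hP, Polynomial.coeff_map, hk, Polynomial.coeff_natDegree, ← hL]
          exact hLx
        have hPne : P ≠ 0 := fun h => hPk (by simp [h])
        have h1 : ((Finset.univ.filter fun x : Fin (n+1) → F => eval x g = 0).filter
            fun x => Fin.tail x = x').card ≤ P.roots.toFinset.card := by
          apply Finset.card_le_card_of_injOn (fun x => x 0) _ (hinj x')
          intro x hx
          simp only [Finset.mem_coe, Finset.mem_filter] at hx ⊢
          obtain ⟨⟨_, hx1⟩, hx2⟩ := hx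
          rw [Multiset.mem_toFinset, Polynomial.mem_roots hPne]
          have he := eval_eq_eval_mv_eval' (Fin.tail x) (x 0) g
          rw [Fin.cons_self_tail, hx2] at he
          show Polynomial.eval (x 0) P = 0
          rw [hP, hp, ← he]
          exact hx1
        calc _ ≤ P.roots.toFinset.card := h1
          _ ≤ P.roots.card := P.roots.toFinset_card_le
          _ ≤ P.natDegree := P.card_roots'
          _ ≤ k := Polynomial.natDegree_map_le
    have hZ : (Finset.univ.filter fun x : Fin (n+1) → F => eval x g = 0).card
        ≤ (Finset.univ.filter fun x' : Fin n → F => eval x' L = 0).card * q + q ^ n * k := by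
      rw [hcount]
      calc ∑ x' : Fin n → F, ((Finset.univ.filter fun x : Fin (n+1) → F =>
            eval x g = 0).filter fun x => Fin.tail x = x').card
          ≤ ∑ x' : Fin n → F, (if eval x' L = 0 then q else k) :=
            Finset.sum_le_sum (fun x' _ => hfiber x')
        _ = (Finset.univ.filter fun x' : Fin n → F => eval x' L = 0).card * q
            + (Finset.univ.filter fun x' : Fin n → F => ¬ eval x' L = 0).card * k := by
            rw [Finset.sum_ite, Finset.sum_const, Finset.sum_const]
            simp [mul_comm]
        _ ≤ _ := by
            gcongr
            calc (Finset.univ.filter fun x' : Fin n → F => ¬ eval x' L = 0).card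
                ≤ (Finset.univ : Finset (Fin n → F)).card := Finset.card_filter_le _ _
              _ = q ^ n := by simp [hq]
    have hIH := ih L hLne
    calc (Finset.univ.filter fun x : Fin (n+1) → F => eval x g = 0).card * q
        ≤ ((Finset.univ.filter fun x' : Fin n → F => eval x' L = 0).card * q + q ^ n * k) * q := by
          gcongr
      _ = (Finset.univ.filter fun x' : Fin n → F => eval x' L = 0).card * q * q + k * q ^ (n+1) := by
          ring
      _ ≤ L.totalDegree * q ^ n * q + k * q ^ (n+1) := by gcongr
      _ = (L.totalDegree + k) * q ^ (n+1) := by ring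
      _ ≤ g.totalDegree * q ^ (n+1) := by gcongr

lemma exists_coord_aux (F K : Type) [Field F] [Field K] [Algebra F K] [Fintype F] [Fintype K]
    (hcard : Fintype.card K = Fintype.card F ^ 2) :
    ∃ π : K →ₗ[F] F, (∀ c : K, π c = 0 ↔ c ∈ Set.range (algebraMap F K)) := by
  have hinj : Function.Injective (algebraMap F K) := (algebraMap F K).injective
  -- finrank = 2
  have hfr : Module.finrank F K = 2 := by
    have h1 : Fintype.card K = Fintype.card F ^ Module.finrank F K := Module.card_eq_pow_finrank
    have h2 : (1 : ℕ) < Fintype.card F := Fintype.one_lt_card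
    have h3 : Fintype.card F ^ Module.finrank F K = Fintype.card F ^ 2 := by
      rw [← h1, hcard]
    exact Nat.pow_right_injective h2 h3
  -- pick α not in range
  have hex : ∃ α : K, α ∉ Set.range (algebraMap F K) := by
    by_contra h
    push_neg at h
    have hsurj : Function.Surjective (algebraMap F K) := fun c => h c
    have := Fintype.card_le_of_surjective _ hsurj
    have h2 : (1 : ℕ) < Fintype.card F := Fintype.one_lt_card
    nlinarith [hcard]
  obtain ⟨α, hα⟩ := hex
  have hli : LinearIndependent F ![(1 : K), α] := by
    rw [linearIndependent_fin2]
    constructor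
    · exact fun h => hα ⟨0, by simp [h.symm]⟩
    · intro a ha
      simp only [Matrix.cons_val_one, Matrix.head_cons, Matrix.cons_val_zero] at ha
      -- ha : a • α = 1
      apply hα
      have ha0 : a ≠ 0 := by rintro rfl; simpa using ha
      refine ⟨a⁻¹, ?_⟩
      rw [Algebra.algebraMap_eq_smul_one]
      rw [← ha, smul_smul, inv_mul_cancel₀ ha0, one_smul]
  let B := basisOfLinearIndependentOfCardEqFinrank hli (by simp [hfr])
  have hB : ∀ i, B i = ![(1:K), α] i := fun i => by
    rw [coe_basisOfLinearIndependentOfCardEqFinrank]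
  refine ⟨B.coord 1, fun c => ?_⟩
  constructor
  · intro h
    have hr := B.sum_repr c
    rw [Fin.sum_univ_two] at hr
    have h1 : B.repr c 1 = 0 := h
    rw [h1, zero_smul, add_zero, hB 0] at hr
    exact ⟨B.repr c 0, by rw [Algebra.algebraMap_eq_smul_one]; simpa using hr⟩
  · rintro ⟨a, rfl⟩
    have : algebraMap F K a = a • B 0 := by
      rw [hB 0, Algebra.algebraMap_eq_smul_one]; simp
    rw [this]
    simp [Module.Basis.coord_apply, map_smul, Module.Basis.repr_self]
theorem reverse_field_extension (F K : Type) [Field F] [Field K] [Algebra F K]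
    [Fintype F] [Fintype K]
    (hcard : Fintype.card K = Fintype.card F ^ 2)
    (t d : ℕ) (f : MvPolynomial (Fin t) K)
    (hdeg : f.totalDegree ≤ d) (hdq : d < Fintype.card F)
    (hfrac : ((Finset.univ.filter fun x : Fin t → F =>
        ∃ a : F, eval (fun i => algebraMap F K (x i)) f = algebraMap F K a).card : ℝ)
        / ((Fintype.card F : ℝ) ^ t) > (d : ℝ) / (Fintype.card F : ℝ)) :
    (∀ m, f.coeff m ∈ Set.range (algebraMap F K)) ∧
    ∃ g : MvPolynomial (Fin t) F,
      MvPolynomial.map (algebraMap F K) g = f ∧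
      g.totalDegree = f.totalDegree ∧
      ∀ i, g.degreeOf i = f.degreeOf i := by
  obtain ⟨π, hπ⟩ := exists_coord_aux F K hcard
  have hinj : Function.Injective (algebraMap F K) := (algebraMap F K).injective
  have hmul : ∀ (c : K) (a : F), π (c * algebraMap F K a) = a * π c := by
    intro c a
    rw [mul_comm, ← Algebra.smul_def, map_smul, smul_eq_mul]
  set h : MvPolynomial (Fin t) F := ∑ m ∈ f.support, monomial m (π (f.coeff m)) with hh
  have hco : ∀ m, h.coeff m = π (f.coeff m) := by
    intro m
    rw [hh, MvPolynomial.coeff_sum]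
    simp only [coeff_monomial]
    rw [Finset.sum_ite_eq' f.support m (fun m' => π (f.coeff m'))]
    split_ifs with hm
    · rfl
    · rw [notMem_support_iff] at hm
      rw [hm, map_zero]
  have hkey : ∀ x : Fin t → F, π (eval (fun i => algebraMap F K (x i)) f) = eval x h := by
    intro x
    conv_lhs => rw [f.as_sum]
    rw [map_sum, map_sum, hh, map_sum]
    apply Finset.sum_congr rfl
    intro m _
    rw [eval_monomial, eval_monomial]
    have hprod : (m.prod fun i e => (algebraMap F K (x i)) ^ e)
        = algebraMap F K (m.prod fun i e => x i ^ e) := by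
      rw [Finsupp.prod, Finsupp.prod, map_prod]
      exact Finset.prod_congr rfl fun i _ => (map_pow _ _ _).symm
    rw [hprod, hmul, mul_comm]
  have hiff : ∀ x : Fin t → F,
      (∃ a : F, eval (fun i => algebraMap F K (x i)) f = algebraMap F K a)
        ↔ eval x h = 0 := by
    intro x
    rw [← hkey]
    constructor
    · rintro ⟨a, ha⟩
      exact (hπ _).mpr ⟨a, ha.symm⟩
    · intro h0
      obtain ⟨a, ha⟩ := (hπ _).mp h0
      exact ⟨a, ha.symm⟩
  have hh0 : h = 0 := by
    by_contra hne
    have hszd := sz_aux F t h hne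
    have htd : h.totalDegree ≤ d := by
      refine le_trans ?_ hdeg
      have hsub : h.support ⊆ f.support := by
        intro m hm
        rw [mem_support_iff] at hm ⊢
        intro h0
        exact hm (by rw [hco m, h0, map_zero])
      exact Finset.sup_mono hsub
    have hfe : (Finset.univ.filter fun x : Fin t → F =>
        ∃ a : F, eval (fun i => algebraMap F K (x i)) f = algebraMap F K a)
        = (Finset.univ.filter fun x : Fin t → F => eval x h = 0) :=
      Finset.filter_congr fun x _ => by rw [hiff x]
    rw [hfe] at hfrac
    set q := Fintype.card F with hq
    have hq0 : (0:ℝ) < (q:ℝ) := by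
      have := Fintype.card_pos (α := F)
      positivity
    have hZ : ((Finset.univ.filter fun x : Fin t → F => eval x h = 0).card : ℝ) * q
        ≤ (d : ℝ) * (q:ℝ) ^ t := by
      have := le_trans hszd (Nat.mul_le_mul_right (q ^ t) htd)
      exact_mod_cast this
    rw [gt_iff_lt, div_lt_div_iff₀ hq0 (by positivity)] at hfrac
    linarith
  have hall : ∀ m, f.coeff m ∈ Set.range (algebraMap F K) := by
    intro m
    apply (hπ _).mp
    rw [← hco m, hh0, coeff_zero]
  refine ⟨hall, ?_⟩
  set g := ∑ m ∈ f.support, monomial m (Classical.choose (hall m)) with hg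
  have hmap : MvPolynomial.map (algebraMap F K) g = f := by
    rw [hg, map_sum]
    conv_rhs => rw [f.as_sum]
    apply Finset.sum_congr rfl
    intro m _
    rw [map_monomial, Classical.choose_spec (hall m)]
  have hsupp : g.support = f.support := by
    rw [← hmap]
    exact (MvPolynomial.support_map_of_injective g hinj).symm
  refine ⟨g, hmap, ?_, fun i => ?_⟩
  · rw [totalDegree, totalDegree, hsupp]
  · rw [degreeOf_eq_sup, degreeOf_eq_sup, hsupp]
end

section
/- (Degree-reducing embedding) Let F be a field, c a positive integer, and i, k positive integers. Define E_c : F^k → F^{i·k} by E_c(ξ_1,…,ξ_k) = (ξ_1, ξ_1^c, …, ξ_1^{c^{i-1}}, …, ξ_k, ξ_k^c, …, ξ_k^{c^{i-1}}). Then for every polynomial f : F^k → F of individual degree less than c^i, there exists a polynomial g : F^{i·k} → F of individual degree less than c such that f(x) = g(E_c(x)) for all x ∈ F^k. -/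
open MvPolynomial

lemma digit_recompose (c : ℕ) : ∀ (i n : ℕ),
    ∑ m ∈ Finset.range i, n / c ^ m % c * c ^ m = n % c ^ i := by
  intro i
  induction i with
  | zero => simp [Nat.mod_one]
  | succ i ih =>
    intro n
    rw [Finset.sum_range_succ, ih, pow_succ, Nat.mod_mul]
    ring

theorem degree_reducing_embedding (F : Type) [Field F] (c i k : ℕ)
    (hc : 0 < c) (hi : 0 < i) (hk : 0 < k)
    (f : MvPolynomial (Fin k) F) (hf : ∀ j, f.degreeOf j < c ^ i) :
    ∃ g : MvPolynomial (Fin k × Fin i) F,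
      (∀ v, g.degreeOf v < c) ∧
      ∀ x : Fin k → F,
        eval x f = eval (fun v : Fin k × Fin i => x v.1 ^ c ^ (v.2 : ℕ)) g := by
  classical
  set D : (Fin k →₀ ℕ) → ((Fin k × Fin i) →₀ ℕ) := fun d =>
    Finsupp.equivFunOnFinite.symm (fun v => d v.1 / c ^ (v.2 : ℕ) % c) with hD
  refine ⟨∑ d ∈ f.support, monomial (D d) (f.coeff d), ?_, ?_⟩
  · intro v
    rw [degreeOf_lt_iff hc]
    intro m hm
    obtain ⟨d, _, hd⟩ := Finset.mem_biUnion.mp (support_sum hm)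
    have hd' := support_monomial_subset hd
    simp only [Finset.mem_singleton] at hd'
    subst hd'
    simp only [hD, Finsupp.coe_equivFunOnFinite_symm]
    exact Nat.mod_lt _ hc
  · intro x
    have hsupp : ∀ d ∈ f.support, ∀ j, d j < c ^ i := fun d hd j =>
      (degreeOf_lt_iff (pow_pos hc i)).mp (hf j) d hd
    rw [map_sum]
    simp only [eval_monomial]
    conv_lhs => rw [f.as_sum]
    rw [map_sum]
    simp only [eval_monomial]
    refine Finset.sum_congr rfl fun d hd => ?_
    congr 1
    rw [Finsupp.prod_pow, Finsupp.prod_pow]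
    rw [← Finset.univ_product_univ, Finset.prod_product]
    refine Finset.prod_congr rfl fun j _ => ?_
    simp only [hD, Finsupp.coe_equivFunOnFinite_symm, ← pow_mul]
    rw [Finset.prod_pow_eq_pow_sum]
    congr 1
    symm
    calc ∑ m : Fin i, c ^ (m : ℕ) * (d j / c ^ (m : ℕ) % c)
        = ∑ m ∈ Finset.range i, d j / c ^ m % c * c ^ m := by
          rw [Fin.sum_univ_eq_sum_range (fun m => c ^ m * (d j / c ^ m % c))]
          exact Finset.sum_congr rfl fun m _ => Nat.mul_comm _ _
      _ = d j % c ^ i := digit_recompose c i (d j)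
      _ = d j := Nat.mod_eq_of_lt (hsupp d hd j)
end

section
/- Let F be a finite field of size q and let f, g : F² → F be distinct polynomials of total degree at most D < q, and let ℓ ⊂ F² be a uniformly random affine line. Then the probability that f and g agree on all of ℓ (f|_ℓ = g|_ℓ) is at most D/q + 1/q. -/
open Finset MvPolynomial
open scoped Classical

private lemma card_roots_le' {F : Type} [Field F] [Fintype F] (p : Polynomial F) (hp : p ≠ 0) :
    (Finset.univ.filter fun t : F => p.eval t = 0).card ≤ p.natDegree := by
  refine le_trans (Finset.card_le_card ?_) ((Multiset.toFinset_card_le _).trans p.card_roots')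
  intro t ht
  simp only [Finset.mem_filter] at ht
  simp [Multiset.mem_toFinset, Polynomial.mem_roots hp, ht.2]

private lemma sz1 {F : Type} [Field F] [Fintype F] (c : MvPolynomial (Fin 1) F) (hc : c ≠ 0) :
    (Finset.univ.filter fun y : Fin 1 → F => eval y c = 0).card ≤ c.totalDegree := by
  set p : Polynomial F := (finSuccEquiv F 0 c).map (eval fun _ : Fin 0 => (0 : F)) with hpdef
  have hinj : Function.Injective (eval (fun _ : Fin 0 => (0 : F)) :
      MvPolynomial (Fin 0) F →+* F) := by
    intro a b hab
    obtain ⟨x, rfl⟩ := C_surjective (Fin 0) a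
    obtain ⟨y, rfl⟩ := C_surjective (Fin 0) b
    simpa using hab
  have hp : p ≠ 0 := by
    rw [hpdef, Ne, Polynomial.map_eq_zero_iff hinj]
    exact fun h => hc (by simpa using congrArg (finSuccEquiv F 0).symm h)
  have hev : ∀ y : Fin 1 → F, eval y c = p.eval (y 0) := by
    intro y
    have h1 : (Fin.cons (y 0) (Fin.tail y) : Fin 1 → F) = y := Fin.cons_self_tail y
    have h2 : (Fin.tail y : Fin 0 → F) = fun _ : Fin 0 => (0 : F) :=
      funext fun i => i.elim0
    conv_lhs => rw [← h1]
    rw [eval_eq_eval_mv_eval', h2]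
  have hcard : (Finset.univ.filter fun y : Fin 1 → F => eval y c = 0).card
      = (Finset.univ.filter fun t : F => p.eval t = 0).card := by
    refine Finset.card_nbij' (fun y => y 0) (fun t => fun _ => t) ?_ ?_ ?_ ?_
    · intro y hy
      simp only [Finset.mem_coe, Finset.mem_filter, Finset.mem_univ, true_and] at hy ⊢
      rw [← hev]; exact hy
    · intro t ht
      simp only [Finset.mem_coe, Finset.mem_filter, Finset.mem_univ, true_and] at ht ⊢
      rw [hev]; exact ht
    · intro y _; funext i; exact congrArg y (Subsingleton.elim _ _)
    · intro t _; rfl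
  calc (Finset.univ.filter fun y : Fin 1 → F => eval y c = 0).card
      ≤ p.natDegree := hcard ▸ card_roots_le' p hp
    _ ≤ (finSuccEquiv F 0 c).natDegree := Polynomial.natDegree_map_le
    _ = degreeOf 0 c := natDegree_finSuccEquiv c
    _ ≤ c.totalDegree := degreeOf_le_totalDegree c 0

private lemma card_filter_cons {F : Type} [Field F] [Fintype F]
    (P : (Fin 2 → F) → Prop) [DecidablePred P] :
    (Finset.univ.filter P).card
      = ∑ y : Fin 1 → F, (Finset.univ.filter fun t : F => P (Fin.cons t y)).card := by
  rw [Finset.card_eq_sum_card_fiberwise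
    (f := fun x : Fin 2 → F => Fin.tail x) (t := Finset.univ) (fun x _ => Finset.mem_univ _)]
  refine Finset.sum_congr rfl fun y _ => ?_
  refine Finset.card_nbij' (fun x => x 0) (fun t => Fin.cons t y) ?_ ?_ ?_ ?_
  · intro x hx
    simp only [Finset.mem_coe, Finset.mem_filter, Finset.mem_univ, true_and] at hx ⊢
    obtain ⟨hx1, hx2⟩ := hx
    rwa [← hx2, Fin.cons_self_tail]
  · intro t ht
    simp only [Finset.mem_coe, Finset.mem_filter, Finset.mem_univ, true_and] at ht ⊢
    exact ⟨ht, by simp⟩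
  · intro x hx
    simp only [Finset.mem_coe, Finset.mem_filter, Finset.mem_univ, true_and] at hx
    show Fin.cons (x 0) y = x
    rw [← hx.2, Fin.cons_self_tail]
  · intro t _; simp

private lemma sz2 {F : Type} [Field F] [Fintype F] (h : MvPolynomial (Fin 2) F) (hh : h ≠ 0)
    (D : ℕ) (hdeg : h.totalDegree ≤ D) :
    (Finset.univ.filter fun x : Fin 2 → F => eval x h = 0).card ≤ D * Fintype.card F := by
  set P : Polynomial (MvPolynomial (Fin 1) F) := finSuccEquiv F 1 h with hPdef
  have hP : P ≠ 0 := by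
    rw [hPdef, Ne, EmbeddingLike.map_eq_zero_iff]
    exact hh
  set d : ℕ := P.natDegree with hd
  have hcd : P.coeff d ≠ 0 := by
    rw [hd, ← Polynomial.leadingCoeff]
    exact Polynomial.leadingCoeff_ne_zero.mpr hP
  have hdd : (P.coeff d).totalDegree + d ≤ D :=
    le_trans (totalDegree_coeff_finSuccEquiv_add_le h d hcd) hdeg
  have hdD : d ≤ D := le_trans (Nat.le_add_left _ _) hdd
  have hcdD : (P.coeff d).totalDegree ≤ D - d := Nat.le_sub_of_add_le hdd
  have hcard1 : Fintype.card (Fin 1 → F) = Fintype.card F := by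
    rw [Fintype.card_fun]; simp
  rw [card_filter_cons (fun x : Fin 2 → F => eval x h = 0)]
  have hterm : ∀ y : Fin 1 → F,
      (Finset.univ.filter fun t : F => eval (Fin.cons t y) h = 0).card
        ≤ if eval y (P.coeff d) = 0 then Fintype.card F else d := by
    intro y
    split_ifs with h0
    · exact le_trans (Finset.card_filter_le _ _) (by simp)
    · have hne : P.map (eval y : MvPolynomial (Fin 1) F →+* F) ≠ 0 := by
        intro hz
        apply h0
        have := congrArg (fun q : Polynomial F => q.coeff d) hz
        simpa [Polynomial.coeff_map] using this
      have heq : (Finset.univ.filter fun t : F => eval (Fin.cons t y) h = 0)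
          = Finset.univ.filter fun t : F =>
              (P.map (eval y : MvPolynomial (Fin 1) F →+* F)).eval t = 0 := by
        apply Finset.filter_congr
        intro t _
        rw [eval_eq_eval_mv_eval']
      rw [heq]
      exact le_trans (card_roots_le' _ hne) (Polynomial.natDegree_map_le)
  calc ∑ y : Fin 1 → F, (Finset.univ.filter fun t : F => eval (Fin.cons t y) h = 0).card
      ≤ ∑ y : Fin 1 → F, (if eval y (P.coeff d) = 0 then Fintype.card F else d) :=
        Finset.sum_le_sum fun y _ => hterm y
    _ = (Finset.univ.filter fun y : Fin 1 → F => eval y (P.coeff d) = 0).card * Fintype.card F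
        + (Finset.univ.filter fun y : Fin 1 → F => ¬ eval y (P.coeff d) = 0).card * d := by
        rw [Finset.sum_ite, Finset.sum_const, Finset.sum_const, smul_eq_mul, smul_eq_mul]
    _ ≤ (D - d) * Fintype.card F + Fintype.card F * d := by
        gcongr
        · exact le_trans (sz1 _ hcd) hcdD
        · exact le_trans (Finset.card_filter_le _ _) (le_of_eq hcard1)
    _ = D * Fintype.card F := by
        rw [mul_comm (Fintype.card F) d, ← add_mul, Nat.sub_add_cancel hdD]

theorem agree_on_random_line_bound (F : Type) [Field F] [Fintype F]
    (D : ℕ) (hD : D < Fintype.card F)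
    (f g : MvPolynomial (Fin 2) F) (hfg : f ≠ g)
    (hf : f.totalDegree ≤ D) (hg : g.totalDegree ≤ D) :
    (((Finset.univ.filter fun ab : (Fin 2 → F) × (Fin 2 → F) => ab.2 ≠ 0).filter
        fun ab => ∀ c : F,
          eval (fun i => ab.1 i + c * ab.2 i) f
            = eval (fun i => ab.1 i + c * ab.2 i) g).card : ℝ)
      / ((Finset.univ.filter fun ab : (Fin 2 → F) × (Fin 2 → F) => ab.2 ≠ 0).card : ℝ)
      ≤ (D : ℝ) / (Fintype.card F : ℝ) + 1 / (Fintype.card F : ℝ) := by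
  set q : ℕ := Fintype.card F with hq
  have hq2 : 2 ≤ q := Fintype.one_lt_card
  set h : MvPolynomial (Fin 2) F := f - g with hhdef
  have hh : h ≠ 0 := sub_ne_zero_of_ne hfg
  have hhdeg : h.totalDegree ≤ D :=
    le_trans (totalDegree_sub f g) (max_le hf hg)
  set Z : Finset (Fin 2 → F) := Finset.univ.filter fun x => eval x h = 0 with hZdef
  have hZ : Z.card ≤ D * q := sz2 h hh D hhdeg
  set S := Finset.univ.filter fun ab : (Fin 2 → F) × (Fin 2 → F) => ab.2 ≠ 0 with hSdef
  set G := S.filter fun ab : (Fin 2 → F) × (Fin 2 → F) => ∀ c : F,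
      eval (fun i => ab.1 i + c * ab.2 i) f = eval (fun i => ab.1 i + c * ab.2 i) g with hGdef
  have hGmem : ∀ ab ∈ G, ab.1 ∈ Z ∧ (fun i => ab.1 i + ab.2 i) ∈ Z := by
    intro ab hab
    rw [hGdef, Finset.mem_filter] at hab
    have h0 := hab.2 0
    have h1 := hab.2 1
    have e0 : (fun i => ab.1 i + 0 * ab.2 i) = ab.1 := by funext i; ring
    have e1 : (fun i => ab.1 i + 1 * ab.2 i) = fun i => ab.1 i + ab.2 i := by
      funext i; ring
    rw [e0] at h0
    rw [e1] at h1
    constructor <;> simp only [hZdef, Finset.mem_filter, Finset.mem_univ, true_and, hhdef,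
      map_sub, sub_eq_zero]
    · exact h0
    · exact h1
  have hG : G.card ≤ Z.card * Z.card := by
    have := Finset.card_le_card_of_injOn
      (f := fun ab : (Fin 2 → F) × (Fin 2 → F) => (ab.1, fun i => ab.1 i + ab.2 i))
      (s := G) (t := Z ×ˢ Z)
      (fun ab hab => Finset.mem_product.mpr (hGmem ab hab))
      (by
        intro a _ b _ hab
        simp only [Prod.mk.injEq] at hab
        obtain ⟨h1, h2⟩ := hab
        refine Prod.ext h1 (funext fun i => ?_)
        have h2i := congrFun h2 i
        have h1i := congrFun h1 i
        linear_combination h2i - h1i)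
    simpa [Finset.card_product] using this
  have hSeq : S = Finset.univ ×ˢ (Finset.univ.filter fun b : Fin 2 → F => b ≠ 0) := by
    ext ab; simp [hSdef]
  have hcard2 : Fintype.card (Fin 2 → F) = q ^ 2 := by
    rw [Fintype.card_fun]; simp [hq]
  have hScard : S.card = q ^ 2 * (q ^ 2 - 1) := by
    rw [hSeq, Finset.card_product, Finset.card_univ, hcard2, Finset.filter_ne',
      Finset.card_erase_of_mem (Finset.mem_univ _), Finset.card_univ, hcard2]
  have hq0 : (0 : ℝ) < (q : ℝ) := by positivity
  have hS0 : (0 : ℝ) < (S.card : ℝ) := by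
    rw [hScard]
    have h1 : 0 < q ^ 2 := by positivity
    have h2 : 0 < q ^ 2 - 1 := by
      have : 1 < q ^ 2 := by nlinarith
      omega
    positivity
  rw [← add_div, div_le_div_iff₀ hS0 hq0]
  have hGR : (G.card : ℝ) ≤ ((D : ℝ) * q) * ((D : ℝ) * q) := by
    have h1 : (G.card : ℝ) ≤ (Z.card : ℝ) * (Z.card : ℝ) := by exact_mod_cast hG
    have hZR : (Z.card : ℝ) ≤ (D : ℝ) * q := by exact_mod_cast hZ
    nlinarith [Nat.cast_nonneg (α := ℝ) Z.card]
  have hSR : (S.card : ℝ) = (q : ℝ) ^ 2 * ((q : ℝ) ^ 2 - 1) := by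
    rw [hScard]
    have h2 : 1 ≤ q ^ 2 := by nlinarith
    push_cast [Nat.cast_sub h2]
    ring
  have hDq : (D : ℝ) + 1 ≤ (q : ℝ) := by exact_mod_cast hD
  rw [hSR]
  have hkey : ((D : ℝ) * q) * ((D : ℝ) * q) * q
      ≤ ((D : ℝ) + 1) * ((q : ℝ) ^ 2 * ((q : ℝ) ^ 2 - 1)) := by
    have hD0 : (0 : ℝ) ≤ (D : ℝ) := Nat.cast_nonneg D
    have hq2R : (2 : ℝ) ≤ (q : ℝ) := by exact_mod_cast hq2
    have h1 : (D : ℝ) * ((D : ℝ) * q) ≤ ((q : ℝ) - 1) * ((D : ℝ) * q) :=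
      mul_le_mul_of_nonneg_right (by linarith) (mul_nonneg hD0 hq0.le)
    have h2 : (0 : ℝ) ≤ (D : ℝ) * ((q : ℝ) - 1) := mul_nonneg hD0 (by linarith)
    have step1 : (D : ℝ) * (D : ℝ) * q ≤ ((D : ℝ) + 1) * ((q : ℝ) ^ 2 - 1) := by
      nlinarith [sq_nonneg ((q : ℝ) - 1)]
    have step2 : ((D : ℝ) * q) * ((D : ℝ) * q) * q
        = ((D : ℝ) * (D : ℝ) * q) * (q : ℝ) ^ 2 := by ring
    have step3 : ((D : ℝ) + 1) * ((q : ℝ) ^ 2 * ((q : ℝ) ^ 2 - 1))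
        = (((D : ℝ) + 1) * ((q : ℝ) ^ 2 - 1)) * (q : ℝ) ^ 2 := by ring
    rw [step2, step3]
    exact mul_le_mul_of_nonneg_right step1 (by positivity)
  calc (G.card : ℝ) * q ≤ ((D : ℝ) * q) * ((D : ℝ) * q) * q :=
        mul_le_mul_of_nonneg_right hGR hq0.le
    _ ≤ ((D : ℝ) + 1) * ((q : ℝ) ^ 2 * ((q : ℝ) ^ 2 - 1)) := hkey
end
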